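/- Let λ be a real number. For every natural number n and every real x, the degenerate Bernoulli polynomials satisfy the recurrence β_{n,λ}(x) = (x+1)_{n,λ} - Σ_{l=0}^{n-1} C(n,l) β_{l,λ}(x) · M_{n-l+1,λ}/(n-l+1), where M_{m,λ} = (2)_{m,λ} - (1)_{m,λ} are the dimorphic Mersenne numbers. -/

import Mathlib

/-- The degenerate falling factorial `(x)_{n,λ} = x (x - λ) (x - 2λ) ⋯ (x - (n-1)λ)`,
with `(x)_{0,λ} = 1`. -/
def degFallingFactorial (lam x : ℝ) (n : ℕ) : ℝ :=
  ∏ i ∈ Finset.range n, (x - i * lam)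

/-- The degenerate exponential `e_λ^x(t) = ∑_{n=0}^∞ (x)_{n,λ} t^n/n!` as a formal
power series in `ℝ[[t]]`. -/
noncomputable def degExpSeries (lam x : ℝ) : PowerSeries ℝ :=
  PowerSeries.mk fun n => degFallingFactorial lam x n / (n.factorial : ℝ)

/-- The formal power series `(e_λ(t) - 1)/t`, whose constant term is `1`. -/
noncomputable def degExpSubOneDivT (lam : ℝ) : PowerSeries ℝ :=
  PowerSeries.mk fun n => degFallingFactorial lam 1 (n + 1) / ((n + 1).factorial : ℝ)

/-- The generating series `(t/(e_λ(t)-1)) ⬝ e_λ^x(t) = ∑_{n=0}^∞ β_{n,λ}(x) t^n/n!` of the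
degenerate Bernoulli polynomials, where `t/(e_λ(t)-1)` denotes the multiplicative inverse
of the series `(e_λ(t)-1)/t`. -/
noncomputable def degBernoulliSeries (lam x : ℝ) : PowerSeries ℝ :=
  (degExpSubOneDivT lam)⁻¹ * degExpSeries lam x

/-- The degenerate Bernoulli polynomial `β_{n,λ}(x)`, read off from its generating series. -/
noncomputable def degBernoulli (lam x : ℝ) (n : ℕ) : ℝ :=
  (n.factorial : ℝ) * PowerSeries.coeff n (degBernoulliSeries lam x)

/-- The dimorphic Mersenne number `M_{n,λ} = (2)_{n,λ} - (1)_{n,λ}`. -/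
def dimorphicMersenne (lam : ℝ) (n : ℕ) : ℝ :=
  degFallingFactorial lam 2 n - degFallingFactorial lam 1 n

/-!
Degenerate exponentials multiply like exponentials, `e_λ^x(t) e_λ^y(t) = e_λ^{x+y}(t)`, which on
coefficients is the degenerate Vandermonde identity. Hence the exponential generating series
`(e_λ^2(t) - e_λ(t))/t` of `M_{n+1,λ}` equals `e_λ(t) ⬝ (e_λ(t) - 1)/t`, and multiplying it by the
generating series of `β_{n,λ}(x)` gives `e_λ^{x+1}(t)`. Comparing coefficients of `tⁿ` gives the
recurrence; its term `l = n` is `β_{n,λ}(x)` because `M_{1,λ} = 1`.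
-/

open Finset PowerSeries Nat

theorem PowerSeries.coeff_mk_div_factorial_mul_mk_div_factorial {K : Type*} [Field K] [CharZero K]
    (a b : ℕ → K) (n : ℕ) :
    coeff n (mk (fun k => a k / k !) * mk (fun k => b k / k !)) =
      (∑ p ∈ antidiagonal n, (n.choose p.1 : K) * a p.1 * b p.2) / n ! := by
  rw [coeff_mul, sum_div]
  refine sum_congr rfl fun p hp => ?_
  obtain rfl := mem_antidiagonal.mp hp
  have hf (k : ℕ) : (k ! : K) ≠ 0 := cast_ne_zero.mpr (factorial_ne_zero k)
  rw [coeff_mk, coeff_mk, cast_add_choose]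
  field_simp [hf]

theorem degFallingFactorial_succ (lam x : ℝ) (n : ℕ) :
    degFallingFactorial lam x (n + 1) = degFallingFactorial lam x n * (x - n * lam) :=
  prod_range_succ _ _

theorem degFallingFactorial_add (lam x y : ℝ) (n : ℕ) :
    degFallingFactorial lam (x + y) n =
      ∑ p ∈ antidiagonal n,
        (n.choose p.1 : ℝ) * degFallingFactorial lam x p.1 * degFallingFactorial lam y p.2 := by
  induction n with
  | zero => simp [degFallingFactorial]
  | succ n ih =>
    simp only [mul_assoc] at ih ⊢
    rw [sum_antidiagonal_choose_succ_mul
        (fun i j => degFallingFactorial lam x i * degFallingFactorial lam y j),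
      degFallingFactorial_succ, ih, sum_mul, ← sum_add_distrib]
    refine sum_congr rfl fun p hp => ?_
    have hn : (n : ℝ) = p.1 + p.2 := by exact_mod_cast (mem_antidiagonal.mp hp).symm
    rw [choose_symm_of_eq_add (mem_antidiagonal.mp hp).symm, degFallingFactorial_succ,
      degFallingFactorial_succ, hn]
    ring

theorem degExpSeries_mul (lam x y : ℝ) :
    degExpSeries lam x * degExpSeries lam y = degExpSeries lam (x + y) := by
  ext n
  rw [degExpSeries, degExpSeries, coeff_mk_div_factorial_mul_mk_div_factorial, degExpSeries,
    coeff_mk, degFallingFactorial_add]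

noncomputable def dimorphicMersenneSeries (lam : ℝ) : PowerSeries ℝ :=
  mk fun n => dimorphicMersenne lam (n + 1) / (n + 1)!

theorem X_mul_degExpSubOneDivT (lam : ℝ) :
    X * degExpSubOneDivT lam = degExpSeries lam 1 - 1 := by
  ext (_ | n)
  · simp [degExpSubOneDivT, degExpSeries, degFallingFactorial]
  · simp [coeff_succ_X_mul, degExpSubOneDivT, degExpSeries, coeff_one]

theorem X_mul_dimorphicMersenneSeries (lam : ℝ) :
    X * dimorphicMersenneSeries lam = degExpSeries lam 2 - degExpSeries lam 1 := by
  ext (_ | n)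
  · simp [dimorphicMersenneSeries, degExpSeries, degFallingFactorial]
  · simp [coeff_succ_X_mul, dimorphicMersenneSeries, degExpSeries, dimorphicMersenne, sub_div]

theorem dimorphicMersenneSeries_eq (lam : ℝ) :
    dimorphicMersenneSeries lam = degExpSeries lam 1 * degExpSubOneDivT lam := by
  refine mul_left_cancel₀ X_ne_zero ?_
  rw [X_mul_dimorphicMersenneSeries, mul_left_comm, X_mul_degExpSubOneDivT, mul_sub, mul_one,
    degExpSeries_mul, one_add_one_eq_two]

theorem constantCoeff_degExpSubOneDivT (lam : ℝ) : constantCoeff (degExpSubOneDivT lam) = 1 := by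
  simp [degExpSubOneDivT, degFallingFactorial]

theorem degBernoulliSeries_mul_dimorphicMersenneSeries (lam x : ℝ) :
    degBernoulliSeries lam x * dimorphicMersenneSeries lam = degExpSeries lam (x + 1) := by
  rw [dimorphicMersenneSeries_eq, degBernoulliSeries, mul_comm (degExpSeries lam 1),
    mul_mul_mul_comm,
    PowerSeries.inv_mul_cancel _ (by simp [constantCoeff_degExpSubOneDivT]), one_mul,
    degExpSeries_mul]

theorem degBernoulliSeries_eq_mk (lam x : ℝ) :
    degBernoulliSeries lam x = mk fun n => degBernoulli lam x n / n ! := by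
  ext n
  rw [coeff_mk, degBernoulli, mul_div_cancel_left₀ _ (cast_ne_zero.mpr (factorial_ne_zero n))]

theorem dimorphicMersenneSeries_eq_mk (lam : ℝ) :
    dimorphicMersenneSeries lam =
      mk fun n => dimorphicMersenne lam (n + 1) / (n + 1 : ℝ) / n ! := by
  ext n
  simp [dimorphicMersenneSeries, factorial_succ, div_div]

theorem dimorphicMersenne_one (lam : ℝ) : dimorphicMersenne lam 1 = 1 := by
  norm_num [dimorphicMersenne, degFallingFactorial]

/-- Theorem 1: `β_{n,λ}(x) = (x+1)_{n,λ} - ∑_{l=0}^{n-1} C(n,l) β_{l,λ}(x) M_{n-l+1,λ}/(n-l+1)`. -/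
theorem degBernoulli_recurrence (lam : ℝ) (n : ℕ) (x : ℝ) :
    degBernoulli lam x n =
      degFallingFactorial lam (x + 1) n -
        ∑ l ∈ Finset.range n,
          (n.choose l : ℝ) * degBernoulli lam x l *
            (dimorphicMersenne lam (n - l + 1) / (n - l + 1 : ℝ)) := by
  have h := congrArg (coeff n) (degBernoulliSeries_mul_dimorphicMersenneSeries lam x)
  rw [degBernoulliSeries_eq_mk, dimorphicMersenneSeries_eq_mk,
    coeff_mk_div_factorial_mul_mk_div_factorial, degExpSeries, coeff_mk,
    div_left_inj' (by positivity), Nat.sum_antidiagonal_eq_sum_range_succ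
      (fun l k => (n.choose l : ℝ) * degBernoulli lam x l *
        (dimorphicMersenne lam (k + 1) / (k + 1 : ℝ))), sum_range_succ] at h
  have hsum : ∑ l ∈ range n, (n.choose l : ℝ) * degBernoulli lam x l *
        (dimorphicMersenne lam (n - l + 1) / ((n - l : ℕ) + 1 : ℝ)) =
      ∑ l ∈ range n, (n.choose l : ℝ) * degBernoulli lam x l *
        (dimorphicMersenne lam (n - l + 1) / (n - l + 1 : ℝ)) :=
    sum_congr rfl fun l hl => by rw [cast_sub (mem_range.mp hl).le]
  rw [hsum, choose_self, Nat.sub_self, zero_add, dimorphicMersenne_one] at h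
  linarith
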